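/- arXiv:1612.00718 — 5 statements merged into one kernel-verified Lean document; each statement's English description precedes it below -/
import Mathlib

section
/- Let Λ = ℤℓ[[T]] and let X be a finitely generated torsion Λ-module whose characteristic power series χ satisfies χ(0) ≠ 0. Then X is finite if and only if its Herbrand quotient q(X) = |X[T]|/|X/TX| equals 1. -/
/-- `χ` is a characteristic power series of the finitely generated torsion
`Λ = ℤ_[p][[T]]`-module `M`: by the structure theorem, `M` is pseudo-isomorphic
(i.e. admits a map with finite kernel and cokernel) to an elementary module
`⊕ᵢ Λ/(Pᵢ)` with the `Pᵢ` nonzero, and `χ = ∏ᵢ Pᵢ`. -/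
def IsCharSeries (p : ℕ) [Fact p.Prime] (M : Type*) [AddCommGroup M]
    [Module (PowerSeries ℤ_[p]) M] (χ : PowerSeries ℤ_[p]) : Prop :=
  ∃ (n : ℕ) (P : Fin n → PowerSeries ℤ_[p]),
    (∀ i, P i ≠ 0) ∧ χ = ∏ i, P i ∧
    ∃ f : M →ₗ[PowerSeries ℤ_[p]] (∀ i, PowerSeries ℤ_[p] ⧸ Ideal.span {P i}),
      Finite (LinearMap.ker f) ∧
      Finite ((∀ i, PowerSeries ℤ_[p] ⧸ Ideal.span {P i}) ⧸ LinearMap.range f)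

/-!
Multiplication by `T` is injective on the elementary module `E = ⊕ᵢ Λ/(Pᵢ)`, since `T ∣ Pᵢ h`
forces `T ∣ h` when `Pᵢ(0) ≠ 0`. A map `M → E` with finite kernel and cokernel preserves the
Herbrand quotient `|coker T| / |ker T|`, and finite groups have Herbrand quotient `1`; hence
`|M/TM| = |M[T]| · |E/TE|`. So `q(M) = 1` exactly when `T` is surjective on `E`, i.e. when
`1 ∈ (T, Pᵢ)` for every `i`; comparing constant terms, every `Pᵢ` is then a unit, so `E = 0`
and `M` is the finite kernel.
-/

namespace AddMonoidHom

variable {G H : Type*} [AddCommGroup G] [AddCommGroup H]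

theorem card_ker_eq_relIndex_map {t : G →+ G} {K : AddSubgroup G} [Finite K]
    (hker : t.ker ≤ K) (hK : K.map t ≤ K) :
    Nat.card t.ker = (K.map t).relIndex K := by
  have hcard : Nat.card (K.map t) ≠ 0 :=
    (Nat.pos_of_dvd_of_pos (AddSubgroup.card_map_dvd K t) Nat.card_pos).ne'
  -- both sides are `|K| / |t K|`
  apply mul_left_cancel₀ hcard
  calc Nat.card (K.map t) * Nat.card t.ker
      = Nat.card t.ker * t.ker.relIndex K := by
        rw [AddSubgroup.relIndex_ker, mul_comm]
    _ = Nat.card K := by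
        rw [← AddSubgroup.relIndex_bot_left, ← AddSubgroup.relIndex_bot_left,
          AddSubgroup.relIndex_mul_relIndex _ _ _ bot_le hker]
    _ = Nat.card (K.map t) * (K.map t).relIndex K := by
        rw [← AddSubgroup.relIndex_bot_left, ← AddSubgroup.relIndex_bot_left,
          AddSubgroup.relIndex_mul_relIndex _ _ _ bot_le hK]

theorem card_ker_eq_index_range [Finite G] (t : G →+ G) : Nat.card t.ker = t.range.index := by
  rw [card_ker_eq_relIndex_map le_top le_top, ← range_eq_map, AddSubgroup.relIndex_top_right]

theorem relIndex_map_eq_index_range {s : H →+ H} (hs : Function.Injective s) {N : AddSubgroup H}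
    (hN : N.map s ≤ N) (hN0 : N.index ≠ 0) : (N.map s).relIndex N = s.range.index := by
  apply mul_right_cancel₀ hN0
  rw [AddSubgroup.relIndex_mul_index hN, N.index_map_of_injective hs, mul_comm]

section Commuting

variable (f : G →+ H) {t : G →+ G} {s : H →+ H}

theorem ker_le_ker_of_comp_eq (hcomm : f.comp t = s.comp f) (hs : Function.Injective s) :
    t.ker ≤ f.ker := fun x hx => hs <| by
  rw [map_zero, ← comp_apply s f, ← hcomm, comp_apply, (mem_ker).mp hx, map_zero]

theorem range_inf_ker_eq_map_ker (hcomm : f.comp t = s.comp f) (hs : Function.Injective s) :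
    t.range ⊓ f.ker = f.ker.map t := by
  have hft (x : G) : f (t x) = s (f x) := DFunLike.congr_fun hcomm x
  ext x
  simp only [AddSubgroup.mem_inf, mem_range, AddSubgroup.mem_map, mem_ker]
  constructor
  · rintro ⟨⟨y, rfl⟩, hy⟩
    exact ⟨y, hs (by rw [← hft, hy, map_zero]), rfl⟩
  · rintro ⟨y, hy, rfl⟩
    exact ⟨⟨y, rfl⟩, by rw [hft, hy, map_zero]⟩

/-- Split along `t.range ≤ t.range ⊔ f.ker ≤ G`: the lower step lives in the finite group
`f.ker`, and the upper one is the pullback along `f` of `s f.range ≤ f.range`. -/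
theorem index_range_eq_card_ker_mul_index_range (hcomm : f.comp t = s.comp f)
    (hs : Function.Injective s) [Finite f.ker] (hf : f.range.index ≠ 0) :
    t.range.index = Nat.card t.ker * s.range.index := by
  have hinf := f.range_inf_ker_eq_map_ker hcomm hs
  have hmap : f.range.map s = t.range.map f := by
    rw [map_range, map_range, hcomm]
  calc t.range.index
      = t.range.relIndex (t.range ⊔ f.ker) * (t.range ⊔ f.ker).index :=
        (AddSubgroup.relIndex_mul_index le_sup_left).symm
    _ = (f.ker.map t).relIndex f.ker * (f.range.map s).relIndex f.range := by
        rw [AddSubgroup.relIndex_sup_left, ← AddSubgroup.inf_relIndex_right, hinf,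
          ← AddSubgroup.comap_map_eq, hmap, AddSubgroup.index_comap]
    _ = Nat.card t.ker * s.range.index := by
        rw [card_ker_eq_relIndex_map (f.ker_le_ker_of_comp_eq hcomm hs) (hinf ▸ inf_le_right),
          relIndex_map_eq_index_range hs (hmap ▸ AddSubgroup.map_le_range _ _) hf]

theorem card_ker_eq_index_range_iff (hcomm : f.comp t = s.comp f)
    (hs : Function.Injective s) [Finite f.ker] (hf : f.range.index ≠ 0) :
    Nat.card t.ker = t.range.index ↔ s.range = ⊤ := by
  have hker := f.ker_le_ker_of_comp_eq hcomm hs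
  have : Finite t.ker :=
    Finite.of_injective (AddSubgroup.inclusion hker) (AddSubgroup.inclusion_injective hker)
  rw [f.index_range_eq_card_ker_mul_index_range hcomm hs hf, left_eq_mul₀ Nat.card_pos.ne',
    AddSubgroup.index_eq_one]

end Commuting

end AddMonoidHom

namespace PowerSeries

variable {A : Type*} [CommRing A]

theorem dvd_of_dvd_X_mul [IsDomain A] {P g : A⟦X⟧} (hP : constantCoeff P ≠ 0)
    (h : P ∣ X * g) : P ∣ g := by
  obtain ⟨k, hk⟩ := h
  obtain ⟨l, rfl⟩ := (X_prime.dvd_or_dvd ⟨g, hk.symm⟩).resolve_left (by rwa [X_dvd_iff])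
  exact ⟨l, mul_left_cancel₀ X_ne_zero (by rw [hk]; ring)⟩

theorem lsmul_X_injective_quotient [IsDomain A] {P : A⟦X⟧} (hP : constantCoeff P ≠ 0) :
    Function.Injective (LinearMap.lsmul A⟦X⟧ (A⟦X⟧ ⧸ Ideal.span {P}) X) := by
  refine (injective_iff_map_eq_zero _).mpr fun x hx => ?_
  obtain ⟨g, rfl⟩ := Submodule.Quotient.mk_surjective _ x
  rw [LinearMap.lsmul_apply, ← Submodule.Quotient.mk_smul, smul_eq_mul,
    Submodule.Quotient.mk_eq_zero, Ideal.mem_span_singleton] at hx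
  rw [Submodule.Quotient.mk_eq_zero, Ideal.mem_span_singleton]
  exact dvd_of_dvd_X_mul hP hx

theorem isUnit_of_lsmul_X_surjective_quotient {P : A⟦X⟧}
    (h : Function.Surjective (LinearMap.lsmul A⟦X⟧ (A⟦X⟧ ⧸ Ideal.span {P}) X)) : IsUnit P := by
  obtain ⟨x, hx⟩ := h (Submodule.Quotient.mk 1)
  obtain ⟨g, rfl⟩ := Submodule.Quotient.mk_surjective _ x
  rw [LinearMap.lsmul_apply, ← Submodule.Quotient.mk_smul, smul_eq_mul, Submodule.Quotient.eq,
    Ideal.mem_span_singleton] at hx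
  rw [isUnit_iff_constantCoeff]
  refine isUnit_of_dvd_unit (map_dvd constantCoeff hx) ?_
  simp

variable {ι : Type*} {P : ι → A⟦X⟧}

theorem lsmul_X_injective_pi_quotient [IsDomain A] (hP : ∀ i, constantCoeff (P i) ≠ 0) :
    Function.Injective (LinearMap.lsmul A⟦X⟧ (∀ i, A⟦X⟧ ⧸ Ideal.span {P i}) X) :=
  .piMap fun i => lsmul_X_injective_quotient (hP i)

theorem subsingleton_pi_quotient_of_lsmul_X_surjective
    (h : Function.Surjective (LinearMap.lsmul A⟦X⟧ (∀ i, A⟦X⟧ ⧸ Ideal.span {P i}) X)) :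
    Subsingleton (∀ i, A⟦X⟧ ⧸ Ideal.span {P i}) := by
  refine @Pi.instSubsingleton _ _ fun i => ?_
  have hi : Function.Surjective (LinearMap.lsmul A⟦X⟧ (A⟦X⟧ ⧸ Ideal.span {P i}) X) :=
    Function.Surjective.of_comp (g := Function.eval (β := fun j => A⟦X⟧ ⧸ Ideal.span {P j}) i)
      ((Function.surjective_eval i).comp h)
  exact Submodule.Quotient.subsingleton_iff.mpr
    (Ideal.span_singleton_eq_top.mpr (isUnit_of_lsmul_X_surjective_quotient hi))

end PowerSeries

theorem stmt4_general (p : ℕ) [Fact p.Prime]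
    (M : Type*) [AddCommGroup M] [Module (PowerSeries ℤ_[p]) M]
    (χ : PowerSeries ℤ_[p]) (hχ : IsCharSeries p M χ)
    (h0 : PowerSeries.constantCoeff (R := ℤ_[p]) χ ≠ 0) :
    Finite M ↔
      Nat.card (LinearMap.ker (LinearMap.lsmul (PowerSeries ℤ_[p]) M PowerSeries.X)) =
        Nat.card (M ⧸ LinearMap.range (LinearMap.lsmul (PowerSeries ℤ_[p]) M PowerSeries.X)) := by
  obtain ⟨n, P, -, rfl, f, hker, hcoker⟩ := hχ
  have hP0 (i : Fin n) : PowerSeries.constantCoeff (P i) ≠ 0 := by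
    rw [map_prod, Finset.prod_ne_zero_iff] at h0
    exact h0 i (Finset.mem_univ i)
  set t := (LinearMap.lsmul (PowerSeries ℤ_[p]) M PowerSeries.X).toAddMonoidHom
  set s := (LinearMap.lsmul (PowerSeries ℤ_[p])
    (∀ i, PowerSeries ℤ_[p] ⧸ Ideal.span {P i}) PowerSeries.X).toAddMonoidHom
  have hcomm : f.toAddMonoidHom.comp t = s.comp f.toAddMonoidHom :=
    AddMonoidHom.ext fun x => f.map_smul _ x
  have : Finite f.toAddMonoidHom.ker := hker
  have : Finite (_ ⧸ f.toAddMonoidHom.range) := hcoker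
  have hq := f.toAddMonoidHom.card_ker_eq_index_range_iff hcomm
    (PowerSeries.lsmul_X_injective_pi_quotient hP0) AddSubgroup.index_ne_zero_of_finite
  change Finite M ↔ Nat.card t.ker = t.range.index
  refine ⟨fun _ => t.card_ker_eq_index_range, fun hq1 => ?_⟩
  have := PowerSeries.subsingleton_pi_quotient_of_lsmul_X_surjective
    (AddMonoidHom.range_eq_top.mp (hq.mp hq1))
  exact Finite.of_injective (fun x => (⟨x, Subsingleton.elim _ _⟩ : LinearMap.ker f))
    fun x y hxy => congrArg Subtype.val hxy

/-- a finitely generated torsion `Λ`-module `M` with characteristic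
power series `χ` satisfying `χ(0) ≠ 0` is finite iff its Herbrand quotient
(for multiplication by `T`) is `1`, i.e. iff `|M[T]| = |M/TM|`. -/
theorem stmt4 (p : ℕ) [Fact p.Prime]
    (M : Type*) [AddCommGroup M] [Module (PowerSeries ℤ_[p]) M]
    [Module.Finite (PowerSeries ℤ_[p]) M]
    (htors : Module.IsTorsion (PowerSeries ℤ_[p]) M)
    (χ : PowerSeries ℤ_[p]) (hχ : IsCharSeries p M χ)
    (h0 : PowerSeries.constantCoeff (R := ℤ_[p]) χ ≠ 0) :
    Finite M ↔
      Nat.card (LinearMap.ker (LinearMap.lsmul (PowerSeries ℤ_[p]) M PowerSeries.X)) =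
        Nat.card (M ⧸ LinearMap.range (LinearMap.lsmul (PowerSeries ℤ_[p]) M PowerSeries.X)) :=
  stmt4_general p M χ hχ h0
end

section
/- Let Λ = ℤℓ[[T]] and let X be a finitely generated torsion Λ-module with characteristic power series χ satisfying χ(0) ≠ 0. Then the Herbrand quotient satisfies q(X) = 1/(ℤℓ : χ(0)ℤℓ), i.e. |X/TX| = |X[T]| · |ℤℓ/χ(0)ℤℓ|. -/
open PowerSeries LinearMap
open scoped nonZeroDivisors

namespace AddSubgroup

variable {G G' : Type*}

theorem relIndex_map_self_of_injective [AddGroup G] {φ : G →+ G} (hφ : Function.Injective φ)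
    {H : AddSubgroup G} [H.FiniteIndex] (hH : H.map φ ≤ H) :
    (H.map φ).relIndex H = φ.range.index := by
  have h := relIndex_mul_index hH
  rw [index_map_of_injective H hφ, mul_comm H.index] at h
  exact mul_right_cancel₀ FiniteIndex.index_ne_zero h

theorem relIndex_range_of_comap_eq [AddGroup G] {φ : G →+ G} {K : AddSubgroup G} [Finite K]
    (hK : K.comap φ = K) : φ.range.relIndex K = Nat.card φ.ker := by
  let φK : K →+ K := (φ.comp K.subtype).codRestrict K fun k => hK.ge k.2
  have hrange : φ.range.addSubgroupOf K = φK.range := by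
    ext ⟨x, hx⟩
    simp only [mem_addSubgroupOf, AddMonoidHom.mem_range]
    constructor
    · rintro ⟨m, rfl⟩
      exact ⟨⟨m, hK.le hx⟩, rfl⟩
    · rintro ⟨k, hk⟩
      exact ⟨k, congrArg Subtype.val hk⟩
  have hker : φK.ker = φ.ker.addSubgroupOf K := by
    ext k
    rw [AddMonoidHom.mem_ker, mem_addSubgroupOf, AddMonoidHom.mem_ker, ← Subtype.val_inj]
    rfl
  have hkerK : φ.ker ≤ K := fun m hm => hK.le (by simp [(AddMonoidHom.mem_ker).1 hm])
  rw [relIndex, hrange, index_range, hker]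
  exact Nat.card_congr (addSubgroupOfEquivOfLe hkerK).toEquiv

theorem index_range_eq_card_ker_mul_index_range [AddCommGroup G] [AddCommGroup G']
    {φ : G →+ G} {ψ : G' →+ G'} {g : G →+ G'} (hg : Function.Surjective g)
    (hcomm : g.comp φ = ψ.comp g) (hψ : Function.Injective ψ) [Finite g.ker] :
    φ.range.index = Nat.card φ.ker * ψ.range.index := by
  have hsup : φ.range ⊔ g.ker = ψ.range.comap g := by
    rw [← comap_map_eq, AddMonoidHom.map_range, hcomm, ← AddMonoidHom.map_range,
      AddMonoidHom.range_eq_top_of_surjective g hg, ← AddMonoidHom.range_eq_map]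
  have hker : g.ker.comap φ = g.ker := by
    ext m
    simp only [mem_comap, AddMonoidHom.mem_ker]
    rw [← AddMonoidHom.comp_apply, hcomm, AddMonoidHom.comp_apply, map_eq_zero_iff ψ hψ]
  calc φ.range.index = φ.range.relIndex (φ.range ⊔ g.ker) * (φ.range ⊔ g.ker).index :=
        (relIndex_mul_index le_sup_left).symm
    _ = Nat.card φ.ker * ψ.range.index := by
      rw [relIndex_sup_left, relIndex_range_of_comap_eq hker, hsup,
        index_comap_of_surjective _ hg]

end AddSubgroup

namespace LinearMap

variable {R M N E : Type*} [CommRing R] [AddCommGroup M] [Module R M] [AddCommGroup N]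
  [Module R N] [AddCommGroup E] [Module R E]

theorem card_quotient_range_lsmul_submodule {r : R} (hr : IsSMulRegular E r)
    (S : Submodule R E) [Finite (E ⧸ S)] :
    Nat.card (S ⧸ range (lsmul R S r)) = Nat.card (E ⧸ range (lsmul R E r)) := by
  set t := (lsmul R E r).toAddMonoidHom
  have hS : (range (lsmul R S r)).toAddSubgroup =
      (S.toAddSubgroup.map t).addSubgroupOf S.toAddSubgroup := by
    ext ⟨x, hx⟩
    simp only [Submodule.mem_toAddSubgroup, mem_range, lsmul_apply, Subtype.ext_iff,
      SetLike.val_smul, Subtype.exists, exists_prop]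
    rfl
  have hmap : S.toAddSubgroup.map t ≤ S.toAddSubgroup := by
    rintro _ ⟨x, hx, rfl⟩
    exact S.smul_mem r hx
  change (range (lsmul R S r)).toAddSubgroup.index = (range (lsmul R E r)).toAddSubgroup.index
  have : Finite (E ⧸ S.toAddSubgroup) := ‹Finite (E ⧸ S)›
  have : S.toAddSubgroup.FiniteIndex := AddSubgroup.finiteIndex_of_finite_quotient
  rw [hS, range_toAddSubgroup]
  exact AddSubgroup.relIndex_map_self_of_injective (φ := t) hr hmap

theorem card_quotient_range_lsmul_of_surjective {r : R} (hr : IsSMulRegular N r)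
    {g : M →ₗ[R] N} (hg : Function.Surjective g) [Finite (ker g)] :
    Nat.card (M ⧸ range (lsmul R M r)) =
      Nat.card (ker (lsmul R M r)) * Nat.card (N ⧸ range (lsmul R N r)) := by
  have : Finite g.toAddMonoidHom.ker := ‹Finite (ker g)›
  change (range (lsmul R M r)).toAddSubgroup.index =
    Nat.card (lsmul R M r).toAddMonoidHom.ker * (range (lsmul R N r)).toAddSubgroup.index
  rw [range_toAddSubgroup, range_toAddSubgroup]
  refine AddSubgroup.index_range_eq_card_ker_mul_index_range (g := g.toAddMonoidHom) hg ?_ hr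
  ext m
  exact g.map_smul r m

theorem card_quotient_range_lsmul_of_finite_ker_of_finite_coker {r : R}
    (hr : IsSMulRegular E r) (f : M →ₗ[R] E) [Finite (ker f)] [Finite (E ⧸ range f)] :
    Nat.card (M ⧸ range (lsmul R M r)) =
      Nat.card (ker (lsmul R M r)) * Nat.card (E ⧸ range (lsmul R E r)) := by
  have : Finite (ker f.rangeRestrict) := by rwa [ker_rangeRestrict]
  rw [card_quotient_range_lsmul_of_surjective (hr.submodule _ r) f.surjective_rangeRestrict,
    card_quotient_range_lsmul_submodule hr]

theorem range_lsmul_pi {ι : Type*} (Ms : ι → Type*) [∀ i, AddCommGroup (Ms i)]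
    [∀ i, Module R (Ms i)] (r : R) :
    range (lsmul R (∀ i, Ms i) r) = Submodule.pi Set.univ fun i => range (lsmul R (Ms i) r) := by
  ext x
  simp only [mem_range, lsmul_apply, Submodule.mem_pi, Set.mem_univ, forall_const]
  constructor
  · rintro ⟨y, rfl⟩ i
    exact ⟨y i, rfl⟩
  · intro h
    choose y hy using h
    exact ⟨y, funext hy⟩

theorem card_quotient_range_lsmul_pi {ι : Type*} [Fintype ι] (Ms : ι → Type*)
    [∀ i, AddCommGroup (Ms i)] [∀ i, Module R (Ms i)] (r : R) :
    Nat.card ((∀ i, Ms i) ⧸ range (lsmul R (∀ i, Ms i) r)) =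
      ∏ i, Nat.card (Ms i ⧸ range (lsmul R (Ms i) r)) := by
  classical
  rw [range_lsmul_pi, Nat.card_congr (Submodule.quotientPi _).toEquiv, Nat.card_pi]

end LinearMap

namespace Ideal

variable {A : Type*} [CommRing A]

theorem card_quotient_span_singleton_mul {a : A} (ha : a ∈ A⁰) (b : A) :
    Nat.card (A ⧸ Ideal.span {a * b}) =
      Nat.card (A ⧸ Ideal.span {a}) * Nat.card (A ⧸ Ideal.span {b}) := by
  set μ := AddMonoidHom.mulLeft a
  have hμ : Function.Injective μ := fun x y h => by
    simpa using (mul_cancel_left_mem_nonZeroDivisors ha).1 h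
  have hab : (Ideal.span {a * b}).toAddSubgroup = (Ideal.span {b}).toAddSubgroup.map μ := by
    ext x
    simp [Ideal.mem_span_singleton', μ, mul_left_comm]
  have ha' : (Ideal.span {a}).toAddSubgroup = μ.range := by
    ext x
    simp [Ideal.mem_span_singleton', μ, mul_comm]
  change (Ideal.span {a * b}).toAddSubgroup.index = (Ideal.span {a}).toAddSubgroup.index *
    (Ideal.span {b}).toAddSubgroup.index
  rw [hab, AddSubgroup.index_map_of_injective _ hμ, ha', mul_comm]

theorem card_quotient_span_singleton_prod {ι : Type*} (s : Finset ι) {a : ι → A}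
    (ha : ∀ i ∈ s, a i ∈ A⁰) :
    Nat.card (A ⧸ Ideal.span {∏ i ∈ s, a i}) = ∏ i ∈ s, Nat.card (A ⧸ Ideal.span {a i}) := by
  classical
  induction s using Finset.induction with
  | empty => simp [Ideal.span_singleton_one]
  | insert i s hi ih =>
    rw [Finset.prod_insert hi, Finset.prod_insert hi,
      card_quotient_span_singleton_mul (ha i (Finset.mem_insert_self i s)),
      ih fun j hj => ha j (Finset.mem_insert_of_mem hj)]

theorem range_lsmul_quotient (I : Ideal A) (a : A) :
    range (lsmul A (A ⧸ I) a) = Submodule.map I.mkQ (Ideal.span {a}) := by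
  ext x
  obtain ⟨x, rfl⟩ := I.mkQ_surjective x
  simp only [mem_range, lsmul_apply, Submodule.mem_map, Ideal.mem_span_singleton']
  constructor
  · rintro ⟨y, hy⟩
    obtain ⟨y, rfl⟩ := I.mkQ_surjective y
    exact ⟨y * a, ⟨y, rfl⟩, by rw [← hy, mul_comm]; rfl⟩
  · rintro ⟨_, ⟨c, rfl⟩, hc⟩
    exact ⟨I.mkQ c, by rw [← hc, mul_comm]; rfl⟩

theorem card_quotient_range_lsmul_quotient (I : Ideal A) (a : A) :
    Nat.card ((A ⧸ I) ⧸ range (lsmul A (A ⧸ I) a)) = Nat.card (A ⧸ (I ⊔ Ideal.span {a})) := by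
  rw [range_lsmul_quotient]
  exact Nat.card_congr (Submodule.quotientQuotientEquivQuotientSup I _).toEquiv

end Ideal

namespace PowerSeries

variable {R : Type*} [CommRing R]

theorem ker_mk_comp_constantCoeff (P : R⟦X⟧) :
    RingHom.ker ((Ideal.Quotient.mk (Ideal.span {constantCoeff P})).comp constantCoeff) =
      Ideal.span {P, X} := by
  ext f
  rw [RingHom.mem_ker, RingHom.comp_apply, Ideal.Quotient.eq_zero_iff_mem,
    Ideal.mem_span_singleton', Ideal.mem_span_pair]
  constructor
  · rintro ⟨c, hc⟩
    obtain ⟨g, hg⟩ := X_dvd_iff.2 (show constantCoeff (f - C c * P) = 0 by simp [hc])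
    exact ⟨C c, g, by linear_combination -hg⟩
  · rintro ⟨a, b, rfl⟩
    exact ⟨constantCoeff a, by simp⟩

theorem card_quotient_span_singleton_range_lsmul_X (P : R⟦X⟧) :
    Nat.card ((R⟦X⟧ ⧸ Ideal.span {P}) ⧸ range (lsmul R⟦X⟧ (R⟦X⟧ ⧸ Ideal.span {P}) X)) =
      Nat.card (R ⧸ Ideal.span {constantCoeff P}) := by
  have hsurj : Function.Surjective
      ((Ideal.Quotient.mk (Ideal.span {constantCoeff P})).comp (constantCoeff (R := R))) :=
    Ideal.Quotient.mk_surjective.comp fun c => ⟨C c, constantCoeff_C c⟩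
  rw [Ideal.card_quotient_range_lsmul_quotient, ← Ideal.span_insert, ← ker_mk_comp_constantCoeff]
  exact Nat.card_congr (RingHom.quotientKerEquivOfSurjective hsurj).toEquiv

theorem isSMulRegular_X_quotient_span_singleton {P : R⟦X⟧} (hP : constantCoeff P ∈ R⁰) :
    IsSMulRegular (R⟦X⟧ ⧸ Ideal.span {P}) (X : R⟦X⟧) := by
  refine IsSMulRegular.of_right_eq_zero_of_smul fun e he => ?_
  obtain ⟨f, rfl⟩ := Ideal.Quotient.mk_surjective e
  change Ideal.Quotient.mk _ (X * f) = 0 at he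
  rw [Ideal.Quotient.eq_zero_iff_mem, Ideal.mem_span_singleton'] at he
  obtain ⟨g, hg⟩ := he
  have hg0 : constantCoeff g = 0 := by
    have := congrArg constantCoeff hg
    rwa [map_mul, map_mul, constantCoeff_X, zero_mul,
      mul_right_mem_nonZeroDivisors_eq_zero_iff hP] at this
  obtain ⟨g', rfl⟩ := X_dvd_iff.2 hg0
  rw [Ideal.Quotient.eq_zero_iff_mem, Ideal.mem_span_singleton']
  exact ⟨g', X_mul_cancel (by rw [← hg, mul_assoc])⟩

end PowerSeries

theorem stmt5_general (p : ℕ) [Fact p.Prime]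
    (M : Type*) [AddCommGroup M] [Module (PowerSeries ℤ_[p]) M]
    (χ : PowerSeries ℤ_[p]) (hχ : IsCharSeries p M χ)
    (h0 : PowerSeries.constantCoeff χ ≠ 0) :
    Nat.card (M ⧸ LinearMap.range (LinearMap.lsmul (PowerSeries ℤ_[p]) M PowerSeries.X)) =
      Nat.card (LinearMap.ker (LinearMap.lsmul (PowerSeries ℤ_[p]) M PowerSeries.X)) *
        Nat.card (ℤ_[p] ⧸ Ideal.span {PowerSeries.constantCoeff χ}) := by
  obtain ⟨n, P, -, rfl, f, hker, hcoker⟩ := hχ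
  have hP : ∀ i, constantCoeff (P i) ∈ ℤ_[p]⁰ := fun i => mem_nonZeroDivisors_of_ne_zero
    fun hi => h0 (by rw [map_prod]; exact Finset.prod_eq_zero (Finset.mem_univ i) hi)
  rw [card_quotient_range_lsmul_of_finite_ker_of_finite_coker
      (IsSMulRegular.pi fun i => isSMulRegular_X_quotient_span_singleton (hP i)) f,
    card_quotient_range_lsmul_pi, map_prod,
    Ideal.card_quotient_span_singleton_prod _ fun i _ => hP i]
  simp only [card_quotient_span_singleton_range_lsmul_X]

/-- for a finitely generated torsion `Λ`-module `M` with characteristic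
power series `χ` satisfying `χ(0) ≠ 0`, the Herbrand quotient is `1/(ℤ_[p] : χ(0)ℤ_[p])`,
i.e. `|M/TM| = |M[T]| · |ℤ_[p]/χ(0)ℤ_[p]|`. -/
theorem stmt5 (p : ℕ) [Fact p.Prime]
    (M : Type*) [AddCommGroup M] [Module (PowerSeries ℤ_[p]) M]
    [Module.Finite (PowerSeries ℤ_[p]) M]
    (htors : Module.IsTorsion (PowerSeries ℤ_[p]) M)
    (χ : PowerSeries ℤ_[p]) (hχ : IsCharSeries p M χ)
    (h0 : PowerSeries.constantCoeff χ ≠ 0) :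
    Nat.card (M ⧸ LinearMap.range (LinearMap.lsmul (PowerSeries ℤ_[p]) M PowerSeries.X)) =
      Nat.card (LinearMap.ker (LinearMap.lsmul (PowerSeries ℤ_[p]) M PowerSeries.X)) *
        Nat.card (ℤ_[p] ⧸ Ideal.span {PowerSeries.constantCoeff χ}) :=
  stmt5_general p M χ hχ h0
end

section
/- Let Λ = ℤℓ[[γ−1]], ω_n = γ^{ℓⁿ} − 1, and let T be a finitely generated torsion Λ-module whose characteristic power series is coprime to all ω_n, with maximal finite submodule F. If the natural map T/ωT → lim→ T/ω_nT (direct limit over the transition maps given by multiplication by ω_n/ω) is the zero map, then T = F; in particular T is finite. -/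
/-- `ω_n = γ^{pⁿ} − 1` in the Iwasawa algebra `Λ = ℤ_[p][[γ−1]] = ℤ_[p][[T]]`,
where `γ = 1 + T`. -/
noncomputable def Om (p : ℕ) [Fact p.Prime] (n : ℕ) : PowerSeries ℤ_[p] :=
  (1 + PowerSeries.X) ^ (p ^ n) - 1

/-- the quotient `ω_m/ω_n = Σ_{k < p^{m−n}} (γ^{pⁿ})^k` (for `m ≥ n`),
a distinguished polynomial in `Λ`. -/
noncomputable def Nu (p : ℕ) [Fact p.Prime] (n m : ℕ) : PowerSeries ℤ_[p] :=
  ∑ k ∈ Finset.range (p ^ (m - n)), ((1 + PowerSeries.X) ^ (p ^ n)) ^ k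

open PowerSeries Submodule

section

variable {R M : Type*} [CommRing R] [AddCommGroup M] [Module R M]

lemma finite_span_singleton_of_le_torsionOf {I : Ideal R} [Finite (R ⧸ I)] {x : M}
    (hI : I ≤ Ideal.torsionOf R M x) : Finite (R ∙ x) :=
  have : Finite (R ⧸ Ideal.torsionOf R M x) :=
    Finite.of_surjective _ (Ideal.Quotient.factor_surjective hI)
  .of_equiv _ (Ideal.quotTorsionOfEquivSpanSingleton R M x).toEquiv

lemma LinearMap.finite_of_finite_ker_range {N : Type*} [AddCommGroup N] [Module R N]
    (f : M →ₗ[R] N) (hker : Finite (LinearMap.ker f)) (hrange : Finite (LinearMap.range f)) :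
    Finite M :=
  f.toAddMonoidHom.finite_iff_finite_ker_range.2 ⟨hker, hrange⟩

lemma finite_span_singleton_of_smul_eq_zero {K : Submodule R M} [Finite K] {χ a : R}
    (hχ : ∀ x : M, χ • x ∈ K) [Finite (R ⧸ Ideal.span {χ, a})] {z : M} (hz : a • z = 0) :
    Finite (R ∙ z) := by
  set g : (R ∙ z) →ₗ[R] M ⧸ K := K.mkQ ∘ₗ (R ∙ z).subtype
  have hker : ∀ y ∈ LinearMap.ker g, (y : M) ∈ K := fun y hy ↦
    (Quotient.mk_eq_zero K).1 hy
  have hrange : LinearMap.range g = R ∙ K.mkQ z := by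
    rw [LinearMap.range_comp, range_subtype, map_span, Set.image_singleton]
  have hann : Ideal.span {χ, a} ≤ Ideal.torsionOf R (M ⧸ K) (K.mkQ z) := by
    rw [Ideal.span_le, Set.insert_subset_iff, Set.singleton_subset_iff]
    refine ⟨?_, ?_⟩ <;> simp only [SetLike.mem_coe, Ideal.mem_torsionOf_iff, ← map_smul]
    · exact (Quotient.mk_eq_zero K).2 (hχ z)
    · rw [hz, map_zero]
  refine g.finite_of_finite_ker_range ?_ ?_
  · exact .of_injective (fun y ↦ (⟨y.1, hker y.1 y.2⟩ : K))
      fun _ _ h ↦ by ext; exact congrArg (Subtype.val : K → M) h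
  · rw [hrange]; exact finite_span_singleton_of_le_torsionOf hann

end

lemma prod_smul_pi_quotient_span_singleton {R ι : Type*} [CommRing R] [Fintype ι] (P : ι → R)
    (y : ∀ i, R ⧸ Ideal.span {P i}) : (∏ i, P i) • y = 0 := by
  ext i
  obtain ⟨r, hr⟩ := Ideal.Quotient.mk_surjective (y i)
  rw [Pi.smul_apply, ← hr, Pi.zero_apply, Algebra.smul_def, Ideal.Quotient.algebraMap_eq,
    ← map_mul, Ideal.Quotient.eq_zero_iff_mem, Ideal.mem_span_singleton]
  exact (Finset.dvd_prod_of_mem P (Finset.mem_univ i)).mul_right r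

lemma IsCharSeries.exists_finite_submodule_smul_mem {p : ℕ} [Fact p.Prime] {M : Type*}
    [AddCommGroup M] [Module (PowerSeries ℤ_[p]) M] {χ : PowerSeries ℤ_[p]}
    (hχ : IsCharSeries p M χ) :
    ∃ K : Submodule (PowerSeries ℤ_[p]) M, Finite K ∧ ∀ x : M, χ • x ∈ K := by
  obtain ⟨n, P, -, rfl, f, hker, -⟩ := hχ
  refine ⟨LinearMap.ker f, hker, fun x ↦ ?_⟩
  rw [LinearMap.mem_ker, map_smul, prod_smul_pi_quotient_span_singleton]

lemma Om_eq_Nu_mul_X (p : ℕ) [Fact p.Prime] (m : ℕ) : Om p m = Nu p 0 m * X := by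
  have h := geom_sum_mul (1 + X : ℤ_[p]⟦X⟧) (p ^ m)
  rw [add_sub_cancel_left] at h
  rw [Om, Nu, Nat.sub_zero, pow_zero, pow_one, h]

lemma PowerSeries.span_X_le_jacobson_bot (R : Type*) [CommRing R] :
    Ideal.span {(X : R⟦X⟧)} ≤ (⊥ : Ideal R⟦X⟧).jacobson := by
  rw [Ideal.span_le, Set.singleton_subset_iff, SetLike.mem_coe, Ideal.mem_jacobson_bot]
  intro y
  simp [isUnit_iff_constantCoeff]

theorem stmt8_general (p : ℕ) [Fact p.Prime]
    (M : Type*) [AddCommGroup M] [Module (PowerSeries ℤ_[p]) M]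
    [Module.Finite (PowerSeries ℤ_[p]) M]
    (χ : PowerSeries ℤ_[p]) (hχ : IsCharSeries p M χ)
    (hcop : ∀ n, Finite (PowerSeries ℤ_[p] ⧸ Ideal.span {χ, Om p n}))
    (F : Submodule (PowerSeries ℤ_[p]) M) (hFfin : Finite F)
    (hFmax : ∀ F' : Submodule (PowerSeries ℤ_[p]) M, Finite F' → F' ≤ F)
    (hzero : ∀ x : M, ∃ m : ℕ,
      (Nu p 0 m) • x ∈ LinearMap.range (LinearMap.lsmul (PowerSeries ℤ_[p]) M (Om p m))) :
    F = ⊤ ∧ Finite M := by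
  obtain ⟨K, hK, hχK⟩ := hχ.exists_finite_submodule_smul_mem
  have hkilled (m : ℕ) (z : M) (hz : Om p m • z = 0) : z ∈ F :=
    have := hcop m
    hFmax _ (finite_span_singleton_of_smul_eq_zero hχK hz) (mem_span_singleton_self z)
  have hcover : ⊤ ≤ F ⊔ Ideal.span {(X : ℤ_[p]⟦X⟧)} • ⊤ := fun x _ ↦ by
    obtain ⟨m, y, hy⟩ := hzero x
    have hz : Om p m • (x - (X : ℤ_[p]⟦X⟧) • y) = 0 := by
      rw [LinearMap.lsmul_apply] at hy
      rw [smul_sub, smul_comm _ (X : ℤ_[p]⟦X⟧) y, hy, smul_smul, mul_comm, ← Om_eq_Nu_mul_X,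
        sub_self]
    simpa using add_mem_sup (hkilled m _ hz)
      (smul_mem_smul (Ideal.mem_span_singleton_self (X : ℤ_[p]⟦X⟧)) (mem_top (x := y)))
  have hF : F = ⊤ := top_le_iff.1 <| le_of_le_smul_of_le_jacobson_bot Module.Finite.fg_top
    (span_X_le_jacobson_bot _) hcover
  subst hF
  exact ⟨rfl, .of_equiv _ (topEquiv (R := ℤ_[p]⟦X⟧)).toEquiv⟩

/-- with `M` a finitely generated torsion `Λ`-module whose characteristic
power series is coprime to all `ω_n`, and `F` its maximal finite submodule: if the
natural map `M/ωM → lim→ M/ω_nM` is zero (i.e. every `x : M` is sent to `0` in some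
`M/ω_mM` by multiplication by `ω_m/ω`), then `M = F`; in particular `M` is finite. -/
theorem stmt8 (p : ℕ) [Fact p.Prime]
    (M : Type*) [AddCommGroup M] [Module (PowerSeries ℤ_[p]) M]
    [Module.Finite (PowerSeries ℤ_[p]) M]
    (htors : Module.IsTorsion (PowerSeries ℤ_[p]) M)
    (χ : PowerSeries ℤ_[p]) (hχ : IsCharSeries p M χ)
    (hcop : ∀ n, Finite (PowerSeries ℤ_[p] ⧸ Ideal.span {χ, Om p n}))
    (F : Submodule (PowerSeries ℤ_[p]) M) (hFfin : Finite F)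
    (hFmax : ∀ F' : Submodule (PowerSeries ℤ_[p]) M, Finite F' → F' ≤ F)
    (hzero : ∀ x : M, ∃ m : ℕ,
      (Nu p 0 m) • x ∈ LinearMap.range (LinearMap.lsmul (PowerSeries ℤ_[p]) M (Om p m))) :
    F = ⊤ ∧ Finite M :=
  stmt8_general p M χ hχ hcop F hFfin hFmax hzero
end

section
/- Let Λ = ℤℓ[[γ−1]], ω_n = γ^{ℓⁿ}−1, and let T be a finitely generated torsion Λ-module with characteristic power series coprime to all ω_n, F its maximal finite submodule, and T̄ = T/F. Then the image of T/ω_nT in the direct limit T_∞ = lim→ T/ω_mT is isomorphic to T̄/ω_nT̄, and this image equals the submodule of fixed points T_∞^{Γ_n}, i.e. the elements of T_∞ annihilated by ω_n. -/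
/-!
Since `Λ/(χ, ω_m)` is finite, some `𝔪^k` lies in `(Pᵢ, ω_m)`; as `Λ/(Pᵢ)` has no nonzero finite
submodule (`X` is a prime of `Λ` not dividing `p`, and both lie in `𝔪`), multiplication by `ω_m`
is injective on the elementary module `⊕ Λ/(Pᵢ)`. Hence `ker ω_m` on `M` lies in the finite
kernel of the pseudo-isomorphism, so inside `F`. On the other hand `F` is killed by some `𝔪^k`
and `ω_{n+k}/ω_n ∈ 𝔪^k`, so `F` dies in `M_∞`. With these two facts, an element of `M_∞` killed
by `ω_n` comes from level `n` up to an element of `ker ω_n ⊆ F`, and the kernel of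
`M → M/ω_nM → M_∞` is `F + ω_nM`.
-/

namespace Iwasawa

open LinearMap Submodule

section DirectLimit

variable {R M L : Type*} [CommRing R] [AddCommGroup M] [Module R M] [AddCommGroup L] [Module R L]
  {ω : ℕ → R} {ν : ℕ → ℕ → R} {F : Submodule R M}
  {g : ∀ n, (M ⧸ range (lsmul R M (ω n))) →ₗ[R] L}

theorem range_le_ker_lsmul (n : ℕ) : range (g n) ≤ ker (lsmul R L (ω n)) := by
  rintro _ ⟨q, rfl⟩
  obtain ⟨x, rfl⟩ := Submodule.Quotient.mk_surjective _ q
  have hx : (Submodule.Quotient.mk (ω n • x) : M ⧸ range (lsmul R M (ω n))) = 0 :=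
    (Submodule.Quotient.mk_eq_zero _).2 (mem_range_self _ x)
  rw [mem_ker, lsmul_apply, ← map_smul, ← Submodule.Quotient.mk_smul, hx, map_zero]

theorem exists_apply_mk_eq
    (hcompat : ∀ n m, n ≤ m → ∀ x : M,
      g m (Submodule.Quotient.mk (ν n m • x)) = g n (Submodule.Quotient.mk x))
    (hsurj : ∀ y : L, ∃ n x, g n x = y) (y : L) (n : ℕ) :
    ∃ m, n ≤ m ∧ ∃ x : M, g m (Submodule.Quotient.mk x) = y := by
  obtain ⟨m, q, rfl⟩ := hsurj y
  obtain ⟨x, rfl⟩ := Submodule.Quotient.mk_surjective _ q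
  exact ⟨max n m, le_max_left n m, ν m (max n m) • x, hcompat m _ (le_max_right n m) x⟩

theorem apply_mk_eq_zero_of_mem
    (hker : ∀ n (x : M), g n (Submodule.Quotient.mk x) = 0 ↔
      ∃ m, n ≤ m ∧ ν n m • x ∈ range (lsmul R M (ω m)))
    (hνF : ∀ n, ∃ m, n ≤ m ∧ ∀ w ∈ F, ν n m • w = 0) (n : ℕ) (w : M) (hw : w ∈ F) :
    g n (Submodule.Quotient.mk w) = 0 := by
  obtain ⟨m, hnm, hm⟩ := hνF n
  exact (hker n w).2 ⟨m, hnm, hm w hw ▸ zero_mem _⟩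

theorem ker_lsmul_le_range (hν : ∀ n m, n ≤ m → ν n m * ω n = ω m)
    (hF : ∀ m, ker (lsmul R M (ω m)) ≤ F)
    (hgF : ∀ n, ∀ w ∈ F, g n (Submodule.Quotient.mk w) = 0)
    (hker : ∀ n (x : M), g n (Submodule.Quotient.mk x) = 0 ↔
      ∃ m, n ≤ m ∧ ν n m • x ∈ range (lsmul R M (ω m)))
    (hcompat : ∀ n m, n ≤ m → ∀ x : M,
      g m (Submodule.Quotient.mk (ν n m • x)) = g n (Submodule.Quotient.mk x))
    (hsurj : ∀ y : L, ∃ n x, g n x = y) (n : ℕ) :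
    ker (lsmul R L (ω n)) ≤ range (g n) := by
  intro y hy
  rw [mem_ker, lsmul_apply] at hy
  obtain ⟨m, hnm, x, rfl⟩ := exists_apply_mk_eq hcompat hsurj y n
  have hx : g m (Submodule.Quotient.mk (ω n • x)) = 0 := by
    rw [Submodule.Quotient.mk_smul, map_smul, hy]
  obtain ⟨k, hmk, z, hz⟩ := (hker m _).1 hx
  rw [lsmul_apply] at hz
  have hw : ν n k • z - ν m k • x ∈ F := hF n <| by
    rw [mem_ker, lsmul_apply, smul_sub, smul_smul, mul_comm, hν n k (hnm.trans hmk), hz,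
      smul_comm, sub_self]
  refine ⟨Submodule.Quotient.mk z, ?_⟩
  calc g n (Submodule.Quotient.mk z) = g k (Submodule.Quotient.mk (ν n k • z)) :=
        (hcompat n k (hnm.trans hmk) z).symm
    _ = g k (Submodule.Quotient.mk (ν m k • x)) := by
      rw [← sub_eq_zero, ← map_sub, ← Submodule.Quotient.mk_sub, hgF k _ hw]
    _ = g m (Submodule.Quotient.mk x) := hcompat m k hmk x

theorem ker_comp_mkQ (hν : ∀ n m, n ≤ m → ν n m * ω n = ω m)
    (hF : ∀ m, ker (lsmul R M (ω m)) ≤ F)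
    (hgF : ∀ n, ∀ w ∈ F, g n (Submodule.Quotient.mk w) = 0)
    (hker : ∀ n (x : M), g n (Submodule.Quotient.mk x) = 0 ↔
      ∃ m, n ≤ m ∧ ν n m • x ∈ range (lsmul R M (ω m))) (n : ℕ) :
    ker ((g n).comp (range (lsmul R M (ω n))).mkQ) = F ⊔ range (lsmul R M (ω n)) := by
  apply le_antisymm
  · intro x hx
    obtain ⟨m, hnm, z, hz⟩ := (hker n x).1 hx
    rw [lsmul_apply] at hz
    have hw : x - ω n • z ∈ F := hF m <| by
      rw [mem_ker, lsmul_apply, smul_sub, smul_comm (ω m) (ω n), hz, smul_smul, mul_comm,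
        hν n m hnm, sub_self]
    exact sub_add_cancel x (ω n • z) ▸ add_mem_sup hw ⟨z, rfl⟩
  · refine sup_le (fun w hw ↦ hgF n w hw) fun s hs ↦ ?_
    rw [mem_ker, comp_apply, mkQ_apply, (Submodule.Quotient.mk_eq_zero _).2 hs, map_zero]

theorem map_mkQ_range_lsmul (F : Submodule R M) (a : R) :
    (range (lsmul R M a)).map F.mkQ = range (lsmul R (M ⧸ F) a) := by
  rw [← range_comp, show F.mkQ ∘ₗ lsmul R M a = lsmul R (M ⧸ F) a ∘ₗ F.mkQ by ext; simp,
    range_comp_of_range_eq_top _ (range_mkQ F)]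

theorem nonempty_range_equiv_quotient (hν : ∀ n m, n ≤ m → ν n m * ω n = ω m)
    (hF : ∀ m, ker (lsmul R M (ω m)) ≤ F)
    (hgF : ∀ n, ∀ w ∈ F, g n (Submodule.Quotient.mk w) = 0)
    (hker : ∀ n (x : M), g n (Submodule.Quotient.mk x) = 0 ↔
      ∃ m, n ≤ m ∧ ν n m • x ∈ range (lsmul R M (ω m))) (n : ℕ) :
    Nonempty (range (g n) ≃ₗ[R] (M ⧸ F) ⧸ range (lsmul R (M ⧸ F) (ω n))) := by
  have hquot : (F ⊔ range (lsmul R M (ω n))).map F.mkQ = range (lsmul R (M ⧸ F) (ω n)) := by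
    rw [Submodule.map_sup, mkQ_map_self, map_mkQ_range_lsmul, bot_sup_eq]
  exact ⟨(LinearEquiv.ofEq _ _ (range_comp_of_range_eq_top _ (range_mkQ _)).symm).trans <|
    (quotKerEquivRange _).symm.trans <|
    (quotEquivOfEq _ _ (ker_comp_mkQ hν hF hgF hker n)).trans <|
    (quotientQuotientEquivQuotient F _ le_sup_left).symm.trans (quotEquivOfEq _ _ hquot)⟩

end DirectLimit

theorem ker_lsmul_le_ker {R M N : Type*} [CommRing R] [AddCommGroup M] [Module R M]
    [AddCommGroup N] [Module R N] {f : M →ₗ[R] N} {r : R} (hr : IsSMulRegular N r) :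
    ker (lsmul R M r) ≤ ker f := fun x hx ↦
  hr.right_eq_zero_of_smul <| by rw [← map_smul, show r • x = 0 from hx, map_zero]

theorem isSMulRegular_pi {R ι : Type*} {N : ι → Type*} [∀ i, SMul R (N i)] {r : R}
    (hr : ∀ i, IsSMulRegular (N i) r) : IsSMulRegular (∀ i, N i) r :=
  fun _ _ h ↦ funext fun i ↦ hr i (congrFun h i)

theorem exists_maximalIdeal_pow_le_annihilator (R : Type*) [CommRing R] [IsLocalRing R]
    (W : Type*) [AddCommGroup W] [Module R W] [Finite W] :
    ∃ k, IsLocalRing.maximalIdeal R ^ k ≤ Module.annihilator R W := by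
  have : Finite (AddMonoid.End W) := Finite.of_injective _ DFunLike.coe_injective
  have : Finite (R ⧸ Module.annihilator R W) :=
    Finite.of_equiv _ (RingHom.quotientKerEquivRange _).toEquiv.symm
  have := isArtinian_of_finite (R := R ⧸ Module.annihilator R W)
    (M := R ⧸ Module.annihilator R W)
  exact IsLocalRing.exists_maximalIdeal_pow_le_of_isArtinianRing_quotient _

theorem dvd_of_dvd_mul_of_dvd_mul {R : Type*} [CommRing R] [IsDomain R] {P x y a : R}
    (hP : P ≠ 0) (hx : Prime x) (hxy : ¬x ∣ y) (hPx : P ∣ x * a) (hPy : P ∣ y * a) : P ∣ a := by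
  obtain ⟨u, hu⟩ := hPx
  obtain ⟨v, hv⟩ := hPy
  have hyu : y * u = x * v := mul_left_cancel₀ hP (by linear_combination x * hv - y * hu)
  obtain ⟨w, rfl⟩ := (hx.dvd_or_dvd ⟨v, hyu⟩).resolve_left hxy
  exact ⟨w, mul_left_cancel₀ hx.ne_zero (by linear_combination hu)⟩

theorem dvd_of_forall_mem_pow_dvd_mul {R : Type*} [CommRing R] [IsDomain R] {I : Ideal R}
    {x y P a : R} (hx : Prime x) (hxy : ¬x ∣ y) (hxI : x ∈ I) (hyI : y ∈ I) (hP : P ≠ 0) :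
    ∀ k, (∀ r ∈ I ^ k, P ∣ r * a) → P ∣ a
  | 0, h => by simpa using h 1 (by simp)
  | k + 1, h => dvd_of_forall_mem_pow_dvd_mul hx hxy hxI hyI hP k fun r hr ↦
      dvd_of_dvd_mul_of_dvd_mul hP hx hxy
        (by rw [← mul_assoc]; exact h _ (pow_succ' I k ▸ Ideal.mul_mem_mul hxI hr))
        (by rw [← mul_assoc]; exact h _ (pow_succ' I k ▸ Ideal.mul_mem_mul hyI hr))

section PowerSeries

open PowerSeries IsLocalRing

theorem coeff_one_one_add_X_pow {R : Type*} [CommSemiring R] (N : ℕ) :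
    coeff 1 ((1 + X : R⟦X⟧) ^ N) = N := by
  rw [show (1 + X : R⟦X⟧) ^ N = ((1 + Polynomial.X) ^ N : Polynomial R) by simp,
    Polynomial.coeff_coe, Polynomial.coeff_one_add_X_pow, Nat.choose_one_right]

theorem mem_maximalIdeal_iff_constantCoeff {R : Type*} [CommRing R] [IsLocalRing R]
    {f : R⟦X⟧} :
    f ∈ maximalIdeal R⟦X⟧ ↔ constantCoeff f ∈ maximalIdeal R := by
  simp only [mem_maximalIdeal, mem_nonunits_iff, isUnit_iff_constantCoeff]

variable (p : ℕ) [Fact p.Prime]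

theorem Om_ne_zero (n : ℕ) : Om p n ≠ 0 := fun h ↦ by
  have h1 := congrArg (coeff 1) h
  rw [Om, map_sub, coeff_one_one_add_X_pow, coeff_one, map_zero] at h1
  norm_num at h1
  exact (Fact.out : p.Prime).ne_zero h1.1

theorem Nu_mul_Om {n m : ℕ} (h : n ≤ m) : Nu p n m * Om p n = Om p m := by
  rw [Nu, Om, Om, geom_sum_mul, ← pow_mul, ← pow_add, Nat.add_sub_cancel' h]

theorem Nu_mul_Nu {n m k : ℕ} (h₁ : n ≤ m) (h₂ : m ≤ k) : Nu p m k * Nu p n m = Nu p n k :=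
  mul_right_cancel₀ (Om_ne_zero p n) <| by
    rw [mul_assoc, Nu_mul_Om p h₁, Nu_mul_Om p h₂, Nu_mul_Om p (h₁.trans h₂)]

theorem natCast_mem_maximalIdeal : (p : ℤ_[p]⟦X⟧) ∈ maximalIdeal ℤ_[p]⟦X⟧ := by
  rw [mem_maximalIdeal_iff_constantCoeff, map_natCast]
  exact PadicInt.p_nonunit

theorem Nu_succ_mem_maximalIdeal (n : ℕ) : Nu p n (n + 1) ∈ maximalIdeal ℤ_[p]⟦X⟧ := by
  rw [mem_maximalIdeal_iff_constantCoeff]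
  simpa [Nu] using PadicInt.p_nonunit

theorem Nu_mem_maximalIdeal_pow (n : ℕ) : ∀ k, Nu p n (n + k) ∈ maximalIdeal ℤ_[p]⟦X⟧ ^ k
  | 0 => by simp [Nu]
  | k + 1 => by
    rw [← Nu_mul_Nu p (n.le_add_right k) (by omega), pow_succ', ← add_assoc]
    exact Ideal.mul_mem_mul (Nu_succ_mem_maximalIdeal p _) (Nu_mem_maximalIdeal_pow n k)

theorem dvd_of_dvd_mul_of_finite_quotient {P χ w a : ℤ_[p]⟦X⟧} (hP : P ≠ 0) (hPχ : P ∣ χ)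
    (hfin : Finite (ℤ_[p]⟦X⟧ ⧸ Ideal.span {χ, w})) (h : P ∣ w * a) : P ∣ a := by
  have := isArtinian_of_finite (R := ℤ_[p]⟦X⟧ ⧸ Ideal.span {χ, w})
    (M := ℤ_[p]⟦X⟧ ⧸ Ideal.span {χ, w})
  obtain ⟨k, hk⟩ := exists_maximalIdeal_pow_le_of_isArtinianRing_quotient (Ideal.span {χ, w})
  have hXp : ¬(X : ℤ_[p]⟦X⟧) ∣ p := by
    rw [X_dvd_iff, map_natCast]
    exact_mod_cast (Fact.out : p.Prime).ne_zero
  refine dvd_of_forall_mem_pow_dvd_mul X_prime hXp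
    (mem_maximalIdeal_iff_constantCoeff.2 (by simp)) (natCast_mem_maximalIdeal p) hP k
    fun r hr ↦ ?_
  obtain ⟨c, d, rfl⟩ := Ideal.mem_span_pair.1 (hk hr)
  rw [add_mul, mul_assoc, mul_assoc]
  exact dvd_add (dvd_mul_of_dvd_right (hPχ.mul_right a) c) (dvd_mul_of_dvd_right h d)

theorem isSMulRegular_quotient_span {P χ w : ℤ_[p]⟦X⟧} (hP : P ≠ 0) (hPχ : P ∣ χ)
    (hfin : Finite (ℤ_[p]⟦X⟧ ⧸ Ideal.span {χ, w})) :
    IsSMulRegular (ℤ_[p]⟦X⟧ ⧸ Ideal.span {P}) w :=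
  (isSMulRegular_quotient_iff_mem_of_smul_mem _ w).2 fun _ ha ↦
    Ideal.mem_span_singleton.2 <|
      dvd_of_dvd_mul_of_finite_quotient p hP hPχ hfin (Ideal.mem_span_singleton.1 ha)

end PowerSeries

end Iwasawa

theorem stmt9_general (p : ℕ) [Fact p.Prime]
    (M : Type*) [AddCommGroup M] [Module (PowerSeries ℤ_[p]) M]
    (χ : PowerSeries ℤ_[p]) (hχ : IsCharSeries p M χ)
    (hcop : ∀ n, Finite (PowerSeries ℤ_[p] ⧸ Ideal.span {χ, Om p n}))
    (F : Submodule (PowerSeries ℤ_[p]) M) (hFfin : Finite F)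
    (hFmax : ∀ F' : Submodule (PowerSeries ℤ_[p]) M, Finite F' → F' ≤ F)
    (L : Type*) [AddCommGroup L] [Module (PowerSeries ℤ_[p]) L]
    (g : ∀ n : ℕ,
      (M ⧸ LinearMap.range (LinearMap.lsmul (PowerSeries ℤ_[p]) M (Om p n)))
        →ₗ[PowerSeries ℤ_[p]] L)
    (hcompat : ∀ n m : ℕ, n ≤ m → ∀ x : M,
      g m (Submodule.Quotient.mk ((Nu p n m) • x)) = g n (Submodule.Quotient.mk x))
    (hsurj : ∀ y : L, ∃ n x, g n x = y)
    (hker : ∀ (n : ℕ) (x : M),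
      g n (Submodule.Quotient.mk x) = 0 ↔ ∃ m, n ≤ m ∧
        (Nu p n m) • x ∈ LinearMap.range (LinearMap.lsmul (PowerSeries ℤ_[p]) M (Om p m))) :
    ∀ n : ℕ,
      LinearMap.range (g n) =
        LinearMap.ker (LinearMap.lsmul (PowerSeries ℤ_[p]) L (Om p n)) ∧
      Nonempty ((LinearMap.range (g n)) ≃ₗ[PowerSeries ℤ_[p]]
        ((M ⧸ F) ⧸ LinearMap.range (LinearMap.lsmul (PowerSeries ℤ_[p]) (M ⧸ F) (Om p n)))) := by
  obtain ⟨_, P, hP, rfl, f, hfker, -⟩ := hχ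
  have hF : ∀ m, LinearMap.ker (LinearMap.lsmul _ M (Om p m)) ≤ F := fun m ↦ by
    have hle : LinearMap.ker (LinearMap.lsmul _ M (Om p m)) ≤ LinearMap.ker f :=
      Iwasawa.ker_lsmul_le_ker <| Iwasawa.isSMulRegular_pi fun i ↦
        Iwasawa.isSMulRegular_quotient_span p (hP i)
          (Finset.dvd_prod_of_mem P (Finset.mem_univ i)) (hcop m)
    exact hFmax _ (Finite.of_injective _ (Submodule.inclusion_injective hle))
  have hνF : ∀ n, ∃ m, n ≤ m ∧ ∀ w ∈ F, Nu p n m • w = 0 := by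
    obtain ⟨k, hk⟩ := Iwasawa.exists_maximalIdeal_pow_le_annihilator (PowerSeries ℤ_[p]) F
    exact fun n ↦ ⟨n + k, n.le_add_right k, fun w hw ↦ congrArg Subtype.val
      (Module.mem_annihilator.1 (hk (Iwasawa.Nu_mem_maximalIdeal_pow p n k)) ⟨w, hw⟩)⟩
  have hgF := Iwasawa.apply_mk_eq_zero_of_mem hker hνF
  have hν : ∀ n m, n ≤ m → Nu p n m * Om p n = Om p m := fun _ _ ↦ Iwasawa.Nu_mul_Om p
  exact fun n ↦ ⟨le_antisymm (Iwasawa.range_le_ker_lsmul n)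
      (Iwasawa.ker_lsmul_le_range hν hF hgF hker hcompat hsurj n),
    Iwasawa.nonempty_range_equiv_quotient hν hF hgF hker n⟩

/-- let `M` be a finitely generated torsion `Λ`-module with characteristic
power series coprime to all `ω_n`, `F` its maximal finite submodule, and `M̄ = M/F`.
Let `L` together with the maps `g n : M/ω_nM → L` be the direct limit
`M_∞ = lim→ M/ω_nM` along the transition maps given by multiplication by `ω_m/ω_n`
(characterized by compatibility, joint surjectivity, and the kernel description).
Then the image of `M/ω_nM` in `M_∞` equals the fixed-point submodule
`M_∞^{Γ_n} = ker(ω_n : M_∞ → M_∞)`, and it is isomorphic to `M̄/ω_nM̄`. -/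
theorem stmt9 (p : ℕ) [Fact p.Prime]
    (M : Type*) [AddCommGroup M] [Module (PowerSeries ℤ_[p]) M]
    [Module.Finite (PowerSeries ℤ_[p]) M]
    (htors : Module.IsTorsion (PowerSeries ℤ_[p]) M)
    (χ : PowerSeries ℤ_[p]) (hχ : IsCharSeries p M χ)
    (hcop : ∀ n, Finite (PowerSeries ℤ_[p] ⧸ Ideal.span {χ, Om p n}))
    (F : Submodule (PowerSeries ℤ_[p]) M) (hFfin : Finite F)
    (hFmax : ∀ F' : Submodule (PowerSeries ℤ_[p]) M, Finite F' → F' ≤ F)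
    (L : Type*) [AddCommGroup L] [Module (PowerSeries ℤ_[p]) L]
    (g : ∀ n : ℕ,
      (M ⧸ LinearMap.range (LinearMap.lsmul (PowerSeries ℤ_[p]) M (Om p n)))
        →ₗ[PowerSeries ℤ_[p]] L)
    (hcompat : ∀ n m : ℕ, n ≤ m → ∀ x : M,
      g m (Submodule.Quotient.mk ((Nu p n m) • x)) = g n (Submodule.Quotient.mk x))
    (hsurj : ∀ y : L, ∃ n x, g n x = y)
    (hker : ∀ (n : ℕ) (x : M),
      g n (Submodule.Quotient.mk x) = 0 ↔ ∃ m, n ≤ m ∧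
        (Nu p n m) • x ∈ LinearMap.range (LinearMap.lsmul (PowerSeries ℤ_[p]) M (Om p m))) :
    ∀ n : ℕ,
      LinearMap.range (g n) =
        LinearMap.ker (LinearMap.lsmul (PowerSeries ℤ_[p]) L (Om p n)) ∧
      Nonempty ((LinearMap.range (g n)) ≃ₗ[PowerSeries ℤ_[p]]
        ((M ⧸ F) ⧸ LinearMap.range (LinearMap.lsmul (PowerSeries ℤ_[p]) (M ⧸ F) (Om p n)))) :=
  stmt9_general p M χ hχ hcop F hFfin hFmax L g hcompat hsurj hker
end

section
/- Let (A_n)_{n∈ℕ} be a system of finite abelian ℓ-groups equipped with maps j_{n,m} : A_n → A_m and N_{m,n} : A_m → A_n for m ≥ n such that N_{m,n} ∘ j_{n,m} is multiplication by ℓ^{m−n} on A_n. If there exists n₀ such that N_{m,n} is an isomorphism for all m ≥ n ≥ n₀, then for every n there exists m ≥ n with j_{n,m} = 0; in particular the direct limit of the A_n along the maps j is trivial. -/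
/-- a compatible system of finite abelian `ℓ`-groups `A n` with extension
maps `j` and norm maps `N` satisfying `N ∘ j = ℓ^{m−n}`: if the norms are ultimately
isomorphisms, then every `A n` capitulates, i.e. for every `n` some `j n m` is zero
(in particular the direct limit along the `j` maps is trivial). -/
theorem stmt11 (l : ℕ) (hl : l.Prime)
    (A : ℕ → Type*) [∀ n, AddCommGroup (A n)] [∀ n, Finite (A n)]
    (hcard : ∀ n, ∃ k : ℕ, Nat.card (A n) = l ^ k)
    (j : ∀ n m : ℕ, n ≤ m → A n →+ A m)
    (N : ∀ m n : ℕ, n ≤ m → A m →+ A n)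
    (hj : ∀ (n m k : ℕ) (h1 : n ≤ m) (h2 : m ≤ k) (x : A n),
      j m k h2 (j n m h1 x) = j n k (h1.trans h2) x)
    (hN : ∀ (k m n : ℕ) (h1 : n ≤ m) (h2 : m ≤ k) (x : A k),
      N m n h1 (N k m h2 x) = N k n (h1.trans h2) x)
    (hNj : ∀ (n m : ℕ) (h : n ≤ m) (x : A n), N m n h (j n m h x) = l ^ (m - n) • x)
    (h0 : ∃ n0 : ℕ, ∀ (n m : ℕ) (h : n ≤ m), n0 ≤ n → Function.Bijective (N m n h)) :
    ∀ n : ℕ, ∃ m : ℕ, ∃ h : n ≤ m, ∀ x : A n, j n m h x = 0 := by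
  intro n
  obtain ⟨n0, hn0⟩ := h0
  set n1 := max n n0 with hn1
  have hnn1 : n ≤ n1 := le_max_left _ _
  obtain ⟨k, hk⟩ := hcard n1
  refine ⟨n1 + k, hnn1.trans (Nat.le_add_right _ _), fun x => ?_⟩
  have hm : n1 ≤ n1 + k := Nat.le_add_right _ _
  rw [← hj n n1 (n1 + k) hnn1 hm x]
  set z := j n n1 hnn1 x
  have hz : N (n1 + k) n1 hm (j n1 (n1 + k) hm z) = 0 := by
    rw [hNj, Nat.add_sub_cancel_left, ← hk, card_nsmul_eq_zero']
  have hinj := (hn0 n1 (n1 + k) hm (le_max_right _ _)).injective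
  exact hinj (hz.trans (map_zero _).symm)
end
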